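/- For all real φ with 0 < φ < π/2 and all real ℓ > 0, if c is defined by sinh c = coth(ℓ/4) · cot φ, w by sinh w = cos φ / sinh(ℓ/2), and v by cosh v = 1 / sin φ, then c > w + v. -/

import Mathlib

open Real

/-- Inverse hyperbolic cosine on `[1, ∞)`. -/
noncomputable def arccosh (x : ℝ) : ℝ := Real.log (x + Real.sqrt (x ^ 2 - 1))

/-!
Write `cot φ = cos φ / sin φ`. From `cosh v = 1 / sin φ` we get `sinh v = cot φ`, and from
`sinh w = cos φ / sinh (ℓ/2)` with `cos φ < 1` we get `cosh w < coth (ℓ/2)`. Hence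
`sinh (w + v) = sinh w cosh v + cosh w sinh v < cot φ (1 / sinh (ℓ/2) + coth (ℓ/2))`, and the
half-angle formula `coth (x/2) = (1 + cosh x) / sinh x` identifies the right-hand side with `sinh c`.
-/

namespace Real

theorem cosh_half_div_sinh_half (x : ℝ) :
    cosh (x / 2) / sinh (x / 2) = (1 + cosh x) / sinh x := by
  have hx : x = 2 * (x / 2) := by ring
  have hnum : 1 + cosh x = 2 * cosh (x / 2) * cosh (x / 2) := by
    rw [hx, cosh_two_mul, ← hx]
    linear_combination -cosh_sq (x / 2)
  have hden : sinh x = 2 * cosh (x / 2) * sinh (x / 2) := by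
    rw [hx, sinh_two_mul, ← hx]
    ring
  rw [hnum, hden, mul_div_mul_left _ _ (by positivity)]

theorem sinh_eq_cos_div_sin_of_cosh_eq {v φ : ℝ} (hv : 0 ≤ v) (hcos : 0 ≤ cos φ)
    (h : cosh v = 1 / sin φ) : sinh v = cos φ / sin φ := by
  have hsin : 0 < sin φ := one_div_pos.mp (h ▸ cosh_pos v)
  have hsq : sinh v ^ 2 = (cos φ / sin φ) ^ 2 := by
    have := sin_sq_add_cos_sq φ
    rw [← sub_eq_of_eq_add (cosh_sq v), h]
    field_simp
    linarith
  exact (pow_left_inj₀ (sinh_nonneg_iff.mpr hv) (by positivity) two_ne_zero).mp hsq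

theorem cosh_lt_cosh_div_sinh {w x : ℝ} (hx : 0 < x) (h : (sinh w * sinh x) ^ 2 < 1) :
    cosh w < cosh x / sinh x := by
  have hsq : (cosh w * sinh x) ^ 2 < cosh x ^ 2 := by
    rw [mul_pow, cosh_sq w, cosh_sq x]
    nlinarith
  rw [lt_div_iff₀ (sinh_pos_iff.mpr hx)]
  exact lt_of_pow_lt_pow_left₀ 2 (cosh_pos x).le hsq

end Real

theorem collar_key_inequality_general (φ ℓ c w v : ℝ)
    (hφ0 : 0 < φ) (hφ : φ < π / 2) (hℓ : 0 < ℓ)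
    (hv0 : 0 ≤ v)
    (hc : Real.sinh c = (Real.cosh (ℓ / 4) / Real.sinh (ℓ / 4)) * (Real.cos φ / Real.sin φ))
    (hw : Real.sinh w = Real.cos φ / Real.sinh (ℓ / 2))
    (hv : Real.cosh v = 1 / Real.sin φ) :
    c > w + v := by
  have hsin : 0 < sin φ := sin_pos_of_pos_of_lt_pi hφ0 (by linarith [pi_pos])
  have hcos : 0 < cos φ := cos_pos_of_mem_Ioo ⟨by linarith [pi_pos], hφ⟩
  have hsinh_v := sinh_eq_cos_div_sin_of_cosh_eq hv0 hcos.le hv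
  have hcosh_w : cosh w < cosh (ℓ / 2) / sinh (ℓ / 2) := by
    refine cosh_lt_cosh_div_sinh (by positivity) ?_
    rw [hw, div_mul_cancel₀ _ (sinh_pos_iff.mpr (by positivity)).ne']
    nlinarith [sin_sq_add_cos_sq φ]
  have hquarter : ℓ / 4 = ℓ / 2 / 2 := by ring
  refine sinh_lt_sinh.mp ?_
  calc sinh (w + v) = cos φ / sin φ * (1 / sinh (ℓ / 2) + cosh w) := by
        rw [sinh_add, hw, hv, hsinh_v]
        ring
    _ < cos φ / sin φ * (1 / sinh (ℓ / 2) + cosh (ℓ / 2) / sinh (ℓ / 2)) := by gcongr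
    _ = sinh c := by
        rw [hc, hquarter, cosh_half_div_sinh_half (ℓ / 2)]
        ring

/-- The distance `c` between a cone point of angle `2φ` and a geodesic of
length `ℓ` exceeds the sum of the collar widths `w + v`. -/
theorem collar_key_inequality (φ ℓ c w v : ℝ)
    (hφ0 : 0 < φ) (hφ : φ < π / 2) (hℓ : 0 < ℓ)
    (hc0 : 0 ≤ c) (hw0 : 0 ≤ w) (hv0 : 0 ≤ v)
    (hc : Real.sinh c = (Real.cosh (ℓ / 4) / Real.sinh (ℓ / 4)) * (Real.cos φ / Real.sin φ))
    (hw : Real.sinh w = Real.cos φ / Real.sinh (ℓ / 2))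
    (hv : Real.cosh v = 1 / Real.sin φ) :
    c > w + v :=
  collar_key_inequality_general φ ℓ c w v hφ0 hφ hℓ hv0 hc hw hv
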